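/- Let Λ be an admissible graph and define u_{[−Λ,J]} : H_J → H_{I∪L} by (u_{[−Λ,J]}ψ)(q^{IL}) = d^{-|J|/2} Σ_{q^J∈F^J} conj(τ(Λ,q^{IJL})) ψ(q^J). Then u_{[−Λ,J]} is unitary, and for every q^L ∈ F^L there exists a complex number λ of modulus one such that Φ_L^* ∘ F_L^* ∘ x_L(q^L)^* ∘ u_{[−Λ,J]} = λ · v_{[Λ,q^L]}^* as operators H_J → H_I. -/

import Mathlib

open scoped BigOperators

noncomputable section

/-- The Hilbert space `H_K` of complex functions on the configurations `F^K`. -/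
abbrev HS (F K : Type*) : Type _ := (K → F) → ℂ

/-- The linear map on function spaces given by an integral kernel. -/
def kernelMap {α β : Type*} [Fintype α] (k : β → α → ℂ) : (α → ℂ) →ₗ[ℂ] (β → ℂ) where
  toFun ψ := fun b => ∑ a, k b a * ψ a
  map_add' ψ φ := by
    funext b
    simp only [Pi.add_apply, mul_add, Finset.sum_add_distrib]
  map_smul' c ψ := by
    funext b
    simp only [Pi.smul_apply, smul_eq_mul, RingHom.id_apply, Finset.mul_sum]
    exact Finset.sum_congr rfl fun _ _ => by ring

/-- The operator of multiplication by a fixed function. -/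
def mulFun {α : Type*} (f : α → ℂ) : (α → ℂ) →ₗ[ℂ] (α → ℂ) where
  toFun ψ := fun a => f a * ψ a
  map_add' ψ φ := by funext a; simp [mul_add]
  map_smul' c ψ := by funext a; simp; ring

/-- The pullback (precomposition) operator along a map of configuration spaces. -/
def compMap {α β : Type*} (σ : β → α) : (α → ℂ) →ₗ[ℂ] (β → ℂ) where
  toFun ψ := fun b => ψ (σ b)
  map_add' _ _ := rfl
  map_smul' _ _ := rfl

variable {F : Type*} [Field F] [Fintype F] [DecidableEq F]

/-- `ε` is an injective character of the additive group of `F` into the unit circle. -/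
def IsCharacter (ε : F → ℂ) : Prop :=
  Function.Injective ε ∧ (∀ a, ‖ε a‖ = 1) ∧ ∀ a b, ε (a + b) = ε a * ε b

/-- The symmetric bicharacter `χ(p,q) = Π_k ε(p_k q_k)`. -/
def chi (ε : F → ℂ) {K : Type*} [Fintype K] (p q : K → F) : ℂ := ∏ k, ε (p k * q k)

/-- The shift operator `x(q)`, `(x(q)ψ)(q₁) = ψ(q₁ - q)`. -/
def shiftOp {K : Type*} (q : K → F) : HS F K →ₗ[ℂ] HS F K :=
  compMap (fun q₁ => q₁ - q)

/-- The multiplier operator `z(p)`, `(z(p)ψ)(q₁) = χ(p,q₁)ψ(q₁)`. -/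
def multOp (ε : F → ℂ) {K : Type*} [Fintype K] (p : K → F) : HS F K →ₗ[ℂ] HS F K :=
  mulFun (chi ε p)

/-- The Weyl operator `w(ξ) = z(p)x(q)` of the phase space point `ξ = (p,q)`. -/
def weylOp (ε : F → ℂ) {K : Type*} [Fintype K] (ξ : (K → F) × (K → F)) :
    HS F K →ₗ[ℂ] HS F K :=
  multOp ε ξ.1 ∘ₗ shiftOp ξ.2

/-- The normalization constant `d^(-n/2)` (where `d = |F|`) as a complex number. -/
def rnorm (F : Type*) [Fintype F] (n : ℕ) : ℂ :=
  (((Fintype.card F : ℝ) ^ (-(n : ℝ) / 2) : ℝ) : ℂ)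

/-- The Haar-normalized inner product on `H_K`:
`⟨ψ,φ⟩ = d^(-|K|) Σ_q conj(ψ q) φ q`. -/
def hinner {K : Type*} [Fintype K] [DecidableEq K] (ψ φ : HS F K) : ℂ :=
  ((Fintype.card F : ℂ) ^ (Fintype.card K))⁻¹ *
    ∑ q : K → F, (starRingEnd ℂ) (ψ q) * φ q

/-- The delta-function basis vector located at `q`. -/
def deltaV {K : Type*} [Fintype K] [DecidableEq K] (q : K → F) : HS F K :=
  fun q' => if q' = q then 1 else 0

/-- The adjoint of an operator with respect to the Haar-normalized inner
products `hinner` on source and target. -/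
def hAdj {K M : Type*} [Fintype K] [Fintype M] [DecidableEq K] [DecidableEq M]
    (A : HS F K →ₗ[ℂ] HS F M) : HS F M →ₗ[ℂ] HS F K :=
  kernelMap (fun qK qM =>
    (Fintype.card F : ℂ) ^ (Fintype.card K) * ((Fintype.card F : ℂ) ^ (Fintype.card M))⁻¹ *
      (starRingEnd ℂ) (A (deltaV qK) qM))

variable {I J L : Type*} [Fintype I] [Fintype J] [Fintype L]
  [DecidableEq I] [DecidableEq J] [DecidableEq L]

/-- Combining configurations on `I`, `J`, `L` into one on `I ⊕ J ⊕ L`. -/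
def combine (qI : I → F) (qJ : J → F) (qL : L → F) : (I ⊕ J ⊕ L) → F :=
  Sum.elim qI (Sum.elim qJ qL)

/-- Inclusion of the input vertices. -/
def inI : I → I ⊕ J ⊕ L := Sum.inl
/-- Inclusion of the output vertices. -/
def inJ : J → I ⊕ J ⊕ L := fun j => Sum.inr (Sum.inl j)
/-- Inclusion of the syndrome vertices. -/
def inL : L → I ⊕ J ⊕ L := fun l => Sum.inr (Sum.inr l)
/-- Inclusion of the input and syndrome vertices. -/
def embIL : I ⊕ L → I ⊕ J ⊕ L := Sum.elim inI inL

/-- The `J`-rows of `Λ` applied to a full configuration (`Λ^J_{IJL} q^{IJL}`). -/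
def appJ (Λ : Matrix (I ⊕ J ⊕ L) (I ⊕ J ⊕ L) F) (v : (I ⊕ J ⊕ L) → F) : J → F :=
  fun j => Λ.mulVec v (inJ j)

/-- The `I`-rows of `Λ` applied to a full configuration (`Λ^I_{IJL} q^{IJL}`). -/
def appI (Λ : Matrix (I ⊕ J ⊕ L) (I ⊕ J ⊕ L) F) (v : (I ⊕ J ⊕ L) → F) : I → F :=
  fun i => Λ.mulVec v (inI i)

/-- The block `Λ^J_{IL}` (rows in `J`, columns in `I ∪ L`). -/
def blockJIL (Λ : Matrix (I ⊕ J ⊕ L) (I ⊕ J ⊕ L) F) : Matrix J (I ⊕ L) F :=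
  fun j il => Λ (inJ j) (embIL il)

/-- A weighted graph (adjacency matrix) is admissible: it is symmetric, the block
`Λ^J_{IL}` is invertible and the block `Λ^{IL}_{IL}` vanishes. -/
def Admissible (Λ : Matrix (I ⊕ J ⊕ L) (I ⊕ J ⊕ L) F) : Prop :=
  Λ.IsSymm ∧ (∃ B : Matrix (I ⊕ L) J F, blockJIL Λ * B = 1 ∧ B * blockJIL Λ = 1) ∧
    ∀ a b : I ⊕ L, Λ (embIL a) (embIL b) = 0

/-- `τ(Λ,·)` is a family of unimodular phases forming a one-dimensional projective
representation: `τ(q₁+q₂) = τ(q₁)τ(q₂)χ(Λq₁,q₂)`. -/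
def IsTau (ε : F → ℂ) (Λ : Matrix (I ⊕ J ⊕ L) (I ⊕ J ⊕ L) F)
    (tau : ((I ⊕ J ⊕ L) → F) → ℂ) : Prop :=
  (∀ q, ‖tau q‖ = 1) ∧
    ∀ q₁ q₂, tau (q₁ + q₂) = tau q₁ * tau q₂ * chi ε (Λ.mulVec q₁) q₂

/-- The graph code operator `v_{[Λ,q^L]} : H_I → H_J`,
`(v ψ)(q^J) = d^(-|I|/2) Σ_{q^I} τ(Λ, q^{IJL}) ψ(q^I)`. -/
def gcode (tau : ((I ⊕ J ⊕ L) → F) → ℂ) (qL : L → F) : HS F I →ₗ[ℂ] HS F J :=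
  kernelMap (fun qJ qI => rnorm F (Fintype.card I) * tau (combine qI qJ qL))

/-- The syndrome-table condition `γ_Λ(ξ^J, q^L, ξ^I) = 0`:
`p^J = Λ^J_{IJL} q^{IJL}` and `p^I = Λ^I_J q^J`. -/
def GammaZero (Λ : Matrix (I ⊕ J ⊕ L) (I ⊕ J ⊕ L) F)
    (pJ qJ : J → F) (qL : L → F) (pI qI : I → F) : Prop :=
  pJ = appJ Λ (combine qI qJ qL) ∧ pI = appI Λ (combine 0 qJ 0)

/-- The weight of a phase space vector `ξ^J = (p^J,q^J)`. -/
def wt {J : Type*} [Fintype J] (pJ qJ : J → F) : ℕ :=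
  (Finset.univ.filter fun j => ¬(pJ j = 0 ∧ qJ j = 0)).card

/-- `Λ` is associated with a `t`-error correcting code: for every set `E ⊆ J` with
at most `2t` elements, `Λ^{J∖E}_{IE} q^{IE} = 0` implies `q^I = 0` and
`Λ^I_E q^E = 0`. -/
def TCode (Λ : Matrix (I ⊕ J ⊕ L) (I ⊕ J ⊕ L) F) (t : ℕ) : Prop :=
  ∀ E : Finset J, E.card ≤ 2 * t → ∀ (qI : I → F) (qJ : J → F),
    (∀ j ∉ E, qJ j = 0) →
    (∀ j ∉ E, appJ Λ (combine qI qJ 0) j = 0) →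
    qI = 0 ∧ appI Λ (combine 0 qJ 0) = 0

/-- Tensoring with the standard (shift invariant) vector `Ω_K ≡ 1`:
the isometry `Φ_K : H_M → H_{M⊕K}`, `(Φψ)(q) = ψ(q∘inl)`. -/
def tensOmega {M K : Type*} : HS F M →ₗ[ℂ] HS F (M ⊕ K) :=
  compMap (fun q => q ∘ Sum.inl)

/-- The Fourier transform acting on the `K`-factor of `H_{M⊕K}`. -/
def fourierR (ε : F → ℂ) {M K : Type*} [Fintype K] [DecidableEq K] :
    HS F (M ⊕ K) →ₗ[ℂ] HS F (M ⊕ K) where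
  toFun φ := fun q => ∑ qK' : K → F,
    rnorm F (Fintype.card K) * chi ε (q ∘ Sum.inr) qK' * φ (Sum.elim (q ∘ Sum.inl) qK')
  map_add' φ₁ φ₂ := by
    funext q
    simp only [Pi.add_apply, mul_add, Finset.sum_add_distrib]
  map_smul' c φ := by
    funext q
    simp only [Pi.smul_apply, smul_eq_mul, RingHom.id_apply, Finset.mul_sum]
    exact Finset.sum_congr rfl fun _ _ => by ring

/-- The multiplier `z(p)` acting on the `K`-factor of `H_{M⊕K}`. -/
def zR (ε : F → ℂ) {M K : Type*} [Fintype K] (p : K → F) :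
    HS F (M ⊕ K) →ₗ[ℂ] HS F (M ⊕ K) :=
  mulFun (fun q => chi ε p (q ∘ Sum.inr))

/-- The selected error `ξ^I_{[q^L]}`: the unique `ξ^I` such that
`γ_Λ(ξ^J, q^L, ξ^I) = 0` for some `ξ^J` of weight at most `t`, if such exists,
and `(0,0)` otherwise. -/
def xiSel (Λ : Matrix (I ⊕ J ⊕ L) (I ⊕ J ⊕ L) F) (t : ℕ) (qL : L → F) :
    (I → F) × (I → F) :=
  @dite _ (∃ ξI : (I → F) × (I → F), ∃ pJ qJ : J → F,
      wt pJ qJ ≤ t ∧ GammaZero Λ pJ qJ qL ξI.1 ξI.2)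
    (Classical.dec _) (fun h => h.choose) (fun _ => (0, 0))
/-- The operator `u_{[-Λ,J]} : H_J → H_{I∪L}`,
`(u ψ)(q^{IL}) = d^(-|J|/2) Σ_{q^J} conj(τ(Λ,q^{IJL})) ψ(q^J)`. -/
def uMinusOp {F : Type*} [Field F] [Fintype F] [DecidableEq F]
    {I J L : Type*} [Fintype I] [Fintype J] [Fintype L]
    [DecidableEq I] [DecidableEq J] [DecidableEq L]
    (tau : ((I ⊕ J ⊕ L) → F) → ℂ) : HS F J →ₗ[ℂ] HS F (I ⊕ L) :=
  kernelMap (fun qIL qJ => rnorm F (Fintype.card J) *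
    (starRingEnd ℂ) (tau (combine (qIL ∘ Sum.inl) qJ (qIL ∘ Sum.inr))))

/-!
Two facts about the kernel of `u_{[-Λ,J]}` do all the work. First, for `q^J, q'^J` the sum
`Σ_{q^{IL}} τ(q^{IL},q^J) conj τ(q^{IL},q'^J)` equals `d^{|I|+|L|}` if `q^J = q'^J` and `0`
otherwise: by the cocycle identity of `τ` its summand is, up to a factor independent of `q^{IL}`,
the character `χ(Δ Λ^J_{IL}, q^{IL})` with `Δ = q^J - q'^J`, and `Δ Λ^J_{IL} = 0` only for `Δ = 0`
since `Λ^J_{IL}` is invertible. Hence `u_{[-Λ,J]}` is an isometry, and it is unitary because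
`|J| = |I| + |L|`. Second, by orthogonality of characters `Φ_L^* F_L^*` is `d^{-|L|/2}` times
evaluation at `p^L = 0`, so `Φ_L^* F_L^* x_L(q^L)^* u_{[-Λ,J]} ψ` at `q^I` is
`d^{-|L|/2} (u_{[-Λ,J]} ψ)(q^I, q^L)`, which is `v_{[Λ,q^L]}^* ψ` at `q^I`; thus `λ = 1`.
-/

open Matrix

section Character

variable {F : Type*} [Field F] {ε : F → ℂ}

theorem IsCharacter.map_zero (hε : IsCharacter ε) : ε 0 = 1 := by
  have hne : ε 0 ≠ 0 := fun h => by simpa [h] using hε.2.1 0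
  have h := hε.2.2 0 0
  rw [add_zero] at h
  exact (mul_eq_left₀ hne).mp h.symm

def IsCharacter.toAddChar (hε : IsCharacter ε) : AddChar F ℂ where
  toFun := ε
  map_zero_eq_one' := hε.map_zero
  map_add_eq_mul' := hε.2.2

theorem IsCharacter.isPrimitive (hε : IsCharacter ε) : hε.toAddChar.IsPrimitive :=
  AddChar.IsPrimitive.of_ne_one fun h => one_ne_zero <| hε.1 <|
    (DFunLike.congr_fun h 1).trans hε.map_zero.symm

theorem IsCharacter.map_sum (hε : IsCharacter ε) {ι : Type*} (s : Finset ι) (f : ι → F) :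
    ε (∑ i ∈ s, f i) = ∏ i ∈ s, ε (f i) := by
  classical
  induction s using Finset.induction_on with
  | empty => simp [hε.map_zero]
  | insert a s ha ih => rw [Finset.sum_insert ha, Finset.prod_insert ha, hε.2.2, ih]

variable {K : Type*} [Fintype K]

theorem chi_eq_apply_dotProduct (hε : IsCharacter ε) (p q : K → F) :
    chi ε p q = ε (p ⬝ᵥ q) :=
  (hε.map_sum _ _).symm

theorem chi_zero_right (hε : IsCharacter ε) (p : K → F) : chi ε p 0 = 1 := by
  rw [chi_eq_apply_dotProduct hε, dotProduct_zero, hε.map_zero]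

variable [Fintype F]

theorem sum_chi [DecidableEq F] [DecidableEq K] (hε : IsCharacter ε) (p : K → F) :
    ∑ q, chi ε p q = if p = 0 then (Fintype.card F : ℂ) ^ Fintype.card K else 0 := by
  calc ∑ q, chi ε p q = ∏ k, ∑ x, hε.toAddChar (x * p k) := by
        rw [Fintype.prod_sum]
        simp only [chi, mul_comm (p _)]
        rfl
    _ = ∏ k, if p k = 0 then (Fintype.card F : ℂ) else 0 := by
        simp only [AddChar.sum_mulShift _ hε.isPrimitive, apply_ite (Nat.cast : ℕ → ℂ),
          Nat.cast_zero]
    _ = _ := by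
        rw [Fintype.prod_ite_zero, Finset.prod_const, Finset.card_univ]
        simp only [funext_iff, Pi.zero_apply]

end Character

section Tau

variable {F : Type*} [Field F] {ε : F → ℂ}
  {I J L : Type*} [Fintype I] [Fintype J] [Fintype L]
  {Λ : Matrix (I ⊕ J ⊕ L) (I ⊕ J ⊕ L) F} {tau : ((I ⊕ J ⊕ L) → F) → ℂ}

theorem IsTau.map_zero (hε : IsCharacter ε) (htau : IsTau ε Λ tau) : tau 0 = 1 := by
  have hne : tau 0 ≠ 0 := fun h => by simpa [h] using htau.1 0
  have h := htau.2 0 0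
  rw [add_zero, mulVec_zero, chi_zero_right hε, mul_one] at h
  exact (mul_eq_left₀ hne).mp h.symm

theorem IsTau.add_mul_conj (htau : IsTau ε Λ tau) (y z : (I ⊕ J ⊕ L) → F) :
    tau (y + z) * (starRingEnd ℂ) (tau y) = tau z * chi ε (Λ *ᵥ y) z := by
  have hy := Complex.mul_conj' (tau y)
  rw [htau.1, Complex.ofReal_one, one_pow] at hy
  rw [htau.2]
  linear_combination (tau z * chi ε (Λ *ᵥ y) z) * hy

end Tau

section Blocks

variable {F : Type*} [Field F] {ε : F → ℂ} {I J L : Type*} [Fintype I] [Fintype J] [Fintype L]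
  {Λ : Matrix (I ⊕ J ⊕ L) (I ⊕ J ⊕ L) F}

theorem mulVec_combine_apply_inJ (x : I ⊕ L → F) (qJ : J → F) (j : J) :
    (Λ *ᵥ combine (x ∘ Sum.inl) qJ (x ∘ Sum.inr)) (inJ j) =
      (blockJIL Λ *ᵥ x) j + (Λ *ᵥ combine 0 qJ 0) (inJ j) := by
  simp only [mulVec, dotProduct, Fintype.sum_sum_type, combine, blockJIL, embIL, inI, inJ, inL,
    Sum.elim_inl, Sum.elim_inr, Function.comp_apply, Pi.zero_apply, mul_zero,
    Finset.sum_const_zero]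
  ring

theorem dotProduct_combine_zero_zero (p : (I ⊕ J ⊕ L) → F) (Δ : J → F) :
    p ⬝ᵥ combine 0 Δ 0 = (p ∘ inJ) ⬝ᵥ Δ := by
  simp [dotProduct, Fintype.sum_sum_type, combine, inJ]

theorem chi_mulVec_combine_combine_zero_zero (hε : IsCharacter ε) (x : I ⊕ L → F)
    (qJ Δ : J → F) :
    chi ε (Λ *ᵥ combine (x ∘ Sum.inl) qJ (x ∘ Sum.inr)) (combine 0 Δ 0) =
      chi ε ((Λ *ᵥ combine 0 qJ 0) ∘ inJ) Δ * chi ε (Δ ᵥ* blockJIL Λ) x := by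
  have hrow : (Λ *ᵥ combine (x ∘ Sum.inl) qJ (x ∘ Sum.inr)) ∘ inJ =
      blockJIL Λ *ᵥ x + (Λ *ᵥ combine 0 qJ 0) ∘ inJ :=
    funext (mulVec_combine_apply_inJ x qJ)
  simp only [chi_eq_apply_dotProduct hε, dotProduct_combine_zero_zero, hrow, dotProduct_comm _ Δ]
  rw [dotProduct_add, hε.2.2, dotProduct_mulVec, mul_comm]

variable [DecidableEq I] [DecidableEq J] [DecidableEq L]

theorem Admissible.card_eq (hΛ : Admissible Λ) :
    Fintype.card J = Fintype.card I + Fintype.card L := by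
  obtain ⟨-, ⟨B, hAB, hBA⟩, -⟩ := hΛ
  rw [← Fintype.card_sum]
  refine le_antisymm ?_ ?_
  · calc Fintype.card J = (blockJIL Λ * B).rank := by rw [hAB, rank_one]
      _ ≤ (blockJIL Λ).rank := rank_mul_le_left _ _
      _ ≤ _ := rank_le_card_width _
  · calc Fintype.card (I ⊕ L) = (B * blockJIL Λ).rank := by rw [hBA, rank_one]
      _ ≤ B.rank := rank_mul_le_left _ _
      _ ≤ _ := rank_le_card_width _

theorem Admissible.vecMul_blockJIL_eq_zero_iff (hΛ : Admissible Λ) {Δ : J → F} :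
    Δ ᵥ* blockJIL Λ = 0 ↔ Δ = 0 := by
  obtain ⟨-, ⟨B, hAB, -⟩, -⟩ := hΛ
  refine ⟨fun h => ?_, fun h => by rw [h, zero_vecMul]⟩
  rw [← vecMul_one Δ, ← hAB, ← vecMul_vecMul, h, zero_vecMul]

end Blocks

section Normalization

variable (F : Type*) [Fintype F]

theorem conj_rnorm (n : ℕ) : (starRingEnd ℂ) (rnorm F n) = rnorm F n :=
  Complex.conj_ofReal _

theorem rnorm_eq_inv_sqrt_pow (n : ℕ) :
    rnorm F n = ((√(Fintype.card F : ℝ) : ℂ) ^ n)⁻¹ := by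
  rw [rnorm, show -(n : ℝ) / 2 = 1 / 2 * -(n : ℝ) by ring, Real.rpow_mul (Nat.cast_nonneg _),
    ← Real.sqrt_eq_rpow, Real.rpow_neg (Real.sqrt_nonneg _), Real.rpow_natCast]
  push_cast
  rfl

theorem card_eq_sqrt_sq : (Fintype.card F : ℂ) = (√(Fintype.card F : ℝ) : ℂ) ^ 2 := by
  rw [← Complex.ofReal_pow, Real.sq_sqrt (Nat.cast_nonneg _), Complex.ofReal_natCast]

theorem rnorm_sq (n : ℕ) : rnorm F n ^ 2 = ((Fintype.card F : ℂ) ^ n)⁻¹ := by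
  rw [rnorm_eq_inv_sqrt_pow, card_eq_sqrt_sq, inv_pow, ← pow_mul, ← pow_mul, mul_comm]

theorem rnorm_mul_rnorm_add [Nonempty F] (m n : ℕ) :
    rnorm F n * rnorm F (m + n) =
      (Fintype.card F : ℂ) ^ m * ((Fintype.card F : ℂ) ^ (m + n))⁻¹ * rnorm F m := by
  have hs : (√(Fintype.card F : ℝ) : ℂ) ≠ 0 := by
    rw [Complex.ofReal_ne_zero, Real.sqrt_ne_zero']
    exact_mod_cast Fintype.card_pos
  simp only [rnorm_eq_inv_sqrt_pow, card_eq_sqrt_sq]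
  field_simp
  ring

end Normalization

theorem kernelMap_eq_mulVec {α β : Type*} [Fintype α] (k : β → α → ℂ) (ψ : α → ℂ) :
    kernelMap k ψ = Matrix.of k *ᵥ ψ := rfl

section HilbertSpace

variable {F : Type*} [Fintype F] {K M : Type*} [Fintype K] [Fintype M]
  [DecidableEq K] [DecidableEq M]

theorem hinner_eq_dotProduct (ψ φ : HS F K) :
    hinner ψ φ = ((Fintype.card F : ℂ) ^ Fintype.card K)⁻¹ * (star ψ ⬝ᵥ φ) := rfl

variable [Nonempty F]

open scoped ComplexOrder in
theorem hinner_self_eq_zero {ψ : HS F K} : hinner ψ ψ = 0 ↔ ψ = 0 := by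
  simp [hinner_eq_dotProduct, Fintype.card_ne_zero]

theorem injective_of_hinner_map_map {A : HS F K →ₗ[ℂ] HS F M}
    (hA : ∀ ψ φ, hinner (A ψ) (A φ) = hinner ψ φ) : Function.Injective A := by
  refine (injective_iff_map_eq_zero A).mpr fun ψ h => ?_
  rw [← hinner_self_eq_zero, ← hA, h, hinner_self_eq_zero]

theorem hinner_kernelMap_of_conjTranspose_mul_self [DecidableEq F]
    {k : (M → F) → (K → F) → ℂ} {c : ℂ} (hk : (Matrix.of k)ᴴ * Matrix.of k = c • 1)
    (ψ φ : HS F K) :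
    hinner (kernelMap k ψ) (kernelMap k φ) =
      (Fintype.card F : ℂ) ^ Fintype.card K * ((Fintype.card F : ℂ) ^ Fintype.card M)⁻¹ * c *
        hinner ψ φ := by
  have hd : (Fintype.card F : ℂ) ≠ 0 := Nat.cast_ne_zero.mpr Fintype.card_ne_zero
  rw [hinner_eq_dotProduct, hinner_eq_dotProduct, kernelMap_eq_mulVec, kernelMap_eq_mulVec,
    star_mulVec, ← dotProduct_mulVec, mulVec_mulVec, hk, smul_mulVec, one_mulVec,
    dotProduct_smul, smul_eq_mul]
  field_simp

end HilbertSpace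

section Isometry

variable {F : Type*} [Field F] [Fintype F] [DecidableEq F] {ε : F → ℂ}
  {I J L : Type*} [Fintype I] [Fintype J] [Fintype L]
  [DecidableEq I] [DecidableEq J] [DecidableEq L]
  {Λ : Matrix (I ⊕ J ⊕ L) (I ⊕ J ⊕ L) F} {tau : ((I ⊕ J ⊕ L) → F) → ℂ}

theorem sum_tau_mul_conj_tau (hε : IsCharacter ε) (hΛ : Admissible Λ) (htau : IsTau ε Λ tau)
    (qJ qJ' : J → F) :
    ∑ x : I ⊕ L → F, tau (combine (x ∘ Sum.inl) qJ (x ∘ Sum.inr)) *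
        (starRingEnd ℂ) (tau (combine (x ∘ Sum.inl) qJ' (x ∘ Sum.inr))) =
      if qJ = qJ' then (Fintype.card F : ℂ) ^ Fintype.card (I ⊕ L) else 0 := by
  have hsplit : ∀ x : I ⊕ L → F, combine (x ∘ Sum.inl) qJ (x ∘ Sum.inr) =
      combine (x ∘ Sum.inl) qJ' (x ∘ Sum.inr) + combine 0 (qJ - qJ') 0 := by
    intro x
    funext v
    rcases v with i | j | l <;> simp [combine]
  simp only [hsplit, htau.add_mul_conj, chi_mulVec_combine_combine_zero_zero hε, ← mul_assoc]
  rw [← Finset.mul_sum, sum_chi hε]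
  simp only [hΛ.vecMul_blockJIL_eq_zero_iff, sub_eq_zero]
  split_ifs with h
  · have hzero : combine (0 : I → F) (qJ - qJ') (0 : L → F) = 0 := by
      funext v
      rcases v with i | j | l <;> simp [combine, h]
    rw [hzero, htau.map_zero hε, h, sub_self, chi_zero_right hε, one_mul, one_mul]
  · rw [mul_zero]

theorem hinner_uMinusOp (hε : IsCharacter ε) (hΛ : Admissible Λ) (htau : IsTau ε Λ tau)
    (ψ φ : HS F J) :
    hinner (uMinusOp (I := I) (L := L) tau ψ) (uMinusOp tau φ) = hinner ψ φ := by
  set r := rnorm F (Fintype.card J)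
  have hk : (Matrix.of fun (x : I ⊕ L → F) qJ =>
        r * (starRingEnd ℂ) (tau (combine (x ∘ Sum.inl) qJ (x ∘ Sum.inr))))ᴴ *
      (Matrix.of fun (x : I ⊕ L → F) qJ =>
        r * (starRingEnd ℂ) (tau (combine (x ∘ Sum.inl) qJ (x ∘ Sum.inr)))) =
      (r ^ 2 * (Fintype.card F : ℂ) ^ Fintype.card (I ⊕ L)) • 1 := by
    ext qJ qJ'
    have hterm : ∀ x : I ⊕ L → F,
        star (r * (starRingEnd ℂ) (tau (combine (x ∘ Sum.inl) qJ (x ∘ Sum.inr)))) *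
          (r * (starRingEnd ℂ) (tau (combine (x ∘ Sum.inl) qJ' (x ∘ Sum.inr)))) =
        r ^ 2 * (tau (combine (x ∘ Sum.inl) qJ (x ∘ Sum.inr)) *
          (starRingEnd ℂ) (tau (combine (x ∘ Sum.inl) qJ' (x ∘ Sum.inr)))) := by
      intro x
      rw [← starRingEnd_apply, map_mul, Complex.conj_conj, conj_rnorm]
      ring
    simp only [mul_apply, conjTranspose_apply, of_apply, hterm, ← Finset.mul_sum,
      sum_tau_mul_conj_tau hε hΛ htau, Matrix.smul_apply, one_apply, smul_eq_mul, mul_ite,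
      mul_one, mul_zero]
  rw [uMinusOp, hinner_kernelMap_of_conjTranspose_mul_self hk, rnorm_sq]
  have hd : (Fintype.card F : ℂ) ≠ 0 := Nat.cast_ne_zero.mpr Fintype.card_ne_zero
  field_simp

end Isometry

theorem Fintype.sum_sumArrow {α β γ R : Type*} [Fintype α] [Fintype β] [Fintype γ]
    [DecidableEq α] [DecidableEq β] [AddCommMonoid R] (f : (α ⊕ β → γ) → R) :
    ∑ b, f b = ∑ x, ∑ y, f (Sum.elim x y) := by
  rw [← Fintype.sum_prod_type']
  exact Fintype.sum_equiv (Equiv.sumArrowEquivProdArrow α β γ) _ _ fun b =>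
    congrArg f (Sum.elim_comp_inl_inr b).symm

theorem tensOmega_apply_sumElim {F M K : Type*} (ψ : HS F M) (x : M → F) (y : K → F) :
    tensOmega (K := K) ψ (Sum.elim x y) = ψ x :=
  rfl

section Adjoints

variable {F : Type*} [Fintype F] [DecidableEq F] {K M : Type*} [Fintype K] [Fintype M]
  [DecidableEq K] [DecidableEq M]

theorem hAdj_apply (A : HS F K →ₗ[ℂ] HS F M) (φ : HS F M) (a : K → F) :
    hAdj A φ a = ∑ b, (Fintype.card F : ℂ) ^ Fintype.card K *
      ((Fintype.card F : ℂ) ^ Fintype.card M)⁻¹ * (starRingEnd ℂ) (A (deltaV a) b) * φ b :=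
  rfl

theorem hAdj_kernelMap_apply (k : (M → F) → (K → F) → ℂ) (φ : HS F M) (a : K → F) :
    hAdj (kernelMap k) φ a = (Fintype.card F : ℂ) ^ Fintype.card K *
      ((Fintype.card F : ℂ) ^ Fintype.card M)⁻¹ * ∑ b, (starRingEnd ℂ) (k b a) * φ b := by
  simp [hAdj_apply, kernelMap, deltaV, Finset.mul_sum, mul_assoc]

theorem hAdj_shiftOp_apply [Field F] (e : K → F) (φ : HS F K) (a : K → F) :
    hAdj (shiftOp e) φ a = φ (a + e) := by
  simp [hAdj_apply, shiftOp, compMap, deltaV, sub_eq_iff_eq_add, Fintype.card_ne_zero]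

variable {I L : Type*} [Fintype I] [Fintype L] [DecidableEq I] [DecidableEq L]

theorem hAdj_tensOmega_apply [Nonempty F] (φ : HS F (I ⊕ L)) (qI : I → F) :
    hAdj (tensOmega (M := I) (K := L)) φ qI =
      ((Fintype.card F : ℂ) ^ Fintype.card L)⁻¹ * ∑ y, φ (Sum.elim qI y) := by
  have hd : (Fintype.card F : ℂ) ≠ 0 := Nat.cast_ne_zero.mpr Fintype.card_ne_zero
  simp [hAdj_apply, Fintype.sum_sumArrow, tensOmega_apply_sumElim, deltaV, Finset.mul_sum,
    pow_add]
  field_simp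

theorem fourierR_deltaV_apply [Field F] (ε : F → ℂ) (a : I ⊕ L → F) (x : I → F) (y : L → F) :
    fourierR ε (deltaV a) (Sum.elim x y) =
      if x = a ∘ Sum.inl then rnorm F (Fintype.card L) * chi ε y (a ∘ Sum.inr) else 0 := by
  conv_lhs => rw [← Sum.elim_comp_inl_inr a]
  simp only [fourierR, deltaV, LinearMap.coe_mk, AddHom.coe_mk, Sum.elim_comp_inl,
    Sum.elim_comp_inr, Sum.elim_eq_iff]
  split_ifs with h <;> simp [h]

theorem hAdj_fourierR_apply [Field F] (ε : F → ℂ) (φ : HS F (I ⊕ L)) (a : I ⊕ L → F) :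
    hAdj (fourierR ε) φ a = rnorm F (Fintype.card L) *
      ∑ y, (starRingEnd ℂ) (chi ε y (a ∘ Sum.inr)) * φ (Sum.elim (a ∘ Sum.inl) y) := by
  simp [hAdj_apply, Fintype.sum_sumArrow, fourierR_deltaV_apply, apply_ite (starRingEnd ℂ),
    conj_rnorm, Finset.mul_sum, mul_assoc]

theorem hAdj_tensOmega_hAdj_fourierR_apply [Field F] {ε : F → ℂ} (hε : IsCharacter ε)
    (φ : HS F (I ⊕ L)) (qI : I → F) :
    hAdj (tensOmega (M := I) (K := L)) (hAdj (fourierR ε) φ) qI =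
      rnorm F (Fintype.card L) * φ (Sum.elim qI 0) := by
  have hd : (Fintype.card F : ℂ) ≠ 0 := Nat.cast_ne_zero.mpr Fintype.card_ne_zero
  calc hAdj (tensOmega (M := I) (K := L)) (hAdj (fourierR ε) φ) qI
      = ((Fintype.card F : ℂ) ^ Fintype.card L)⁻¹ * rnorm F (Fintype.card L) *
          ∑ y, (starRingEnd ℂ) (∑ z, chi ε y z) * φ (Sum.elim qI y) := by
        simp only [hAdj_tensOmega_apply, hAdj_fourierR_apply, Sum.elim_comp_inl,
          Sum.elim_comp_inr, ← Finset.mul_sum, map_sum, Finset.sum_mul]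
        rw [Finset.sum_comm, mul_assoc]
    _ = rnorm F (Fintype.card L) * φ (Sum.elim qI 0) := by
        simp only [sum_chi hε, apply_ite (starRingEnd ℂ), map_zero, map_pow, map_natCast,
          ite_mul, zero_mul, Finset.sum_ite_eq', Finset.mem_univ, if_true]
        field_simp

end Adjoints

section Coisometries

variable {F : Type*} [Field F] [Fintype F] [DecidableEq F] {ε : F → ℂ}
  {I J L : Type*} [Fintype I] [Fintype J] [Fintype L]
  [DecidableEq I] [DecidableEq J] [DecidableEq L]
  {Λ : Matrix (I ⊕ J ⊕ L) (I ⊕ J ⊕ L) F} {tau : ((I ⊕ J ⊕ L) → F) → ℂ}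

theorem surjective_uMinusOp (hε : IsCharacter ε) (hΛ : Admissible Λ) (htau : IsTau ε Λ tau) :
    Function.Surjective (uMinusOp (I := I) (L := L) tau) := by
  refine (LinearMap.injective_iff_surjective_of_finrank_eq_finrank ?_).mp
    (injective_of_hinner_map_map (hinner_uMinusOp hε hΛ htau))
  simp only [Module.finrank_fintype_fun_eq_card, Fintype.card_fun, Fintype.card_sum, hΛ.card_eq]

theorem uMinusOp_apply_sumElim (ψ : HS F J) (qI : I → F) (qL : L → F) :
    uMinusOp tau ψ (Sum.elim qI qL) =
      ∑ qJ, rnorm F (Fintype.card J) * (starRingEnd ℂ) (tau (combine qI qJ qL)) * ψ qJ :=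
  rfl

omit [Field F] [Fintype L] [DecidableEq L] in
theorem hAdj_gcode_apply (qL : L → F) (ψ : HS F J) (qI : I → F) :
    hAdj (gcode tau qL) ψ qI = (Fintype.card F : ℂ) ^ Fintype.card I *
      ((Fintype.card F : ℂ) ^ Fintype.card J)⁻¹ * rnorm F (Fintype.card I) *
        ∑ qJ, (starRingEnd ℂ) (tau (combine qI qJ qL)) * ψ qJ := by
  simp only [gcode, hAdj_kernelMap_apply, map_mul, conj_rnorm, Finset.mul_sum, mul_assoc]

theorem hAdj_comp_uMinusOp_eq_hAdj_gcode (hε : IsCharacter ε) (hΛ : Admissible Λ)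
    (qL : L → F) :
    hAdj (tensOmega (M := I) (K := L)) ∘ₗ hAdj (fourierR ε (M := I) (K := L)) ∘ₗ
        hAdj (shiftOp (Sum.elim (0 : I → F) qL)) ∘ₗ uMinusOp tau = hAdj (gcode tau qL) := by
  refine LinearMap.ext fun ψ => funext fun qI => ?_
  have hshift : Sum.elim qI (0 : L → F) + Sum.elim (0 : I → F) qL = Sum.elim qI qL := by
    rw [← Sum.elim_add_add, add_zero, zero_add]
  simp only [LinearMap.comp_apply, hAdj_tensOmega_hAdj_fourierR_apply hε, hAdj_shiftOp_apply,
    hshift, hAdj_gcode_apply]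
  rw [uMinusOp_apply_sumElim, hΛ.card_eq, Finset.mul_sum, Finset.mul_sum]
  refine Finset.sum_congr rfl fun qJ _ => ?_
  rw [← rnorm_mul_rnorm_add]
  ring

end Coisometries

/-- For an admissible graph `Λ`, the operator `u_{[-Λ,J]}` is
unitary, and for every `q^L` there is a unimodular `λ` with
`Φ_L^* F_L^* x_L(q^L)^* u_{[-Λ,J]} = λ · v_{[Λ,q^L]}^*`. -/
theorem uMinus_unitary_implements_coisometries
    {F : Type*} [Field F] [Fintype F] [DecidableEq F]
    {I J L : Type*} [Fintype I] [Fintype J] [Fintype L]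
    [DecidableEq I] [DecidableEq J] [DecidableEq L]
    (ε : F → ℂ) (hε : IsCharacter ε)
    (Λ : Matrix (I ⊕ J ⊕ L) (I ⊕ J ⊕ L) F) (hΛ : Admissible Λ)
    (tau : ((I ⊕ J ⊕ L) → F) → ℂ) (htau : IsTau ε Λ tau) :
    (∀ (ψ φ : HS F J),
      hinner (uMinusOp (I := I) (L := L) tau ψ) (uMinusOp tau φ) = hinner ψ φ) ∧
    Function.Surjective (uMinusOp (I := I) (L := L) tau) ∧
    ∀ qL : L → F, ∃ lam : ℂ, ‖lam‖ = 1 ∧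
      hAdj (tensOmega (M := I) (K := L)) ∘ₗ hAdj (fourierR ε (M := I) (K := L)) ∘ₗ
          hAdj (shiftOp (Sum.elim (0 : I → F) qL)) ∘ₗ uMinusOp tau
        = lam • hAdj (gcode tau qL) :=
  ⟨hinner_uMinusOp hε hΛ htau, surjective_uMinusOp hε hΛ htau, fun qL =>
    ⟨1, norm_one, by rw [one_smul]; exact hAdj_comp_uMinusOp_eq_hAdj_gcode hε hΛ qL⟩⟩
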